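/- arXiv:2507.10507 — 4 statements merged into one kernel-verified Lean document; each statement's English description precedes it below -/
import Mathlib

section
/- Let u, v be in a finite connected graph with i.i.d. Gaussian couplings and let S ⊆ E be a set of edges whose edge-induced subgraph does not connect u and v. Then the conditional expectation of the relative ground-state spin given the couplings on S vanishes: E[σ_u σ_v | {J_e}_{e∈S}] = 0 almost surely. -/
open MeasureTheory ProbabilityTheory
open scoped Classical

/-- The Edwards–Anderson Hamiltonian `H_J(σ) = Σ_{e={u,v}} J_e σ_u σ_v` on a finite graph,
whose edges `e : E` have endpoints `ends e = (u, v)`. -/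
def eaH {V E : Type} [Fintype E] (ends : E → V × V) (J : E → ℝ) (σ : V → ℝ) : ℝ :=
  ∑ e, J e * σ (ends e).1 * σ (ends e).2

/-- The set of spin configurations `σ ∈ {-1,1}^V`. -/
def Spins (V : Type) : Set (V → ℝ) := {σ | ∀ v, σ v = 1 ∨ σ v = -1}

/-- A ground state: a spin configuration maximizing the Hamiltonian `H_J`. -/
def IsGroundState {V E : Type} [Fintype E] (ends : E → V × V) (J : E → ℝ) (σ : V → ℝ) :
    Prop :=
  σ ∈ Spins V ∧ ∀ σ' ∈ Spins V, eaH ends J σ' ≤ eaH ends J σ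

/-- `reach ends A x y`: `y` can be reached from `x` by a path using only edges in `A`. -/
def reach {V E : Type} (ends : E → V × V) (A : Set E) : V → V → Prop :=
  Relation.ReflTransGen (fun x y => ∃ e ∈ A, ends e = (x, y) ∨ ends e = (y, x))

/-- The product measure of i.i.d. standard Gaussian couplings `{J_e}`. -/
noncomputable def gaussPi (E : Type) [Fintype E] : Measure (E → ℝ) :=
  Measure.pi fun _ : E => gaussianReal 0 1

/-- The sub-σ-algebra generated by the couplings `{J_e}_{e ∈ S}`. -/
def coordSigma (E : Type) [Fintype E] (S : Set E) : MeasurableSpace (E → ℝ) :=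
  MeasurableSpace.comap (fun (J : E → ℝ) (e : S) => J (e : E)) inferInstance

/-! Let `τ` be `-1` on the `S`-component `C` of `u` and `1` elsewhere. The gauge transformation
`J_e ↦ τ_x τ_y J_e`, `σ ↦ τ σ` flips `J_e` exactly on the edges leaving `C`, so it preserves the
law of the couplings, maps ground states to ground states, reverses the sign of `σ_u σ_v`, and,
since no edge of `S` leaves `C`, fixes every coupling on `S`. Hence `g` and `-g` have the same
integral over every set determined by `{J_e}_{e ∈ S}`. -/

section GroundStates

variable {V E : Type} (ends : E → V × V)

lemma Spins.sq_apply {σ : V → ℝ} (hσ : σ ∈ Spins V) (w : V) : σ w ^ 2 = 1 := by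
  rcases hσ w with h | h <;> simp [h]

lemma Spins.abs_apply {σ : V → ℝ} (hσ : σ ∈ Spins V) (w : V) : |σ w| = 1 := by
  rcases hσ w with h | h <;> simp [h]

lemma Spins.mul_mem {σ τ : V → ℝ} (hτ : τ ∈ Spins V) (hσ : σ ∈ Spins V) :
    τ * σ ∈ Spins V := by
  intro w
  rcases hτ w with h | h <;> rcases hσ w with h' | h' <;> simp [h, h']

lemma Spins.mul_mul_cancel_left {τ : V → ℝ} (hτ : τ ∈ Spins V) (σ : V → ℝ) :
    τ * (τ * σ) = σ := by
  funext w
  simp only [Pi.mul_apply, ← mul_assoc, ← sq, Spins.sq_apply hτ, one_mul]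

lemma finite_spins [Finite V] : (Spins V).Finite := by
  refine (Set.Finite.pi' fun _ => (Set.toFinite ({1, -1} : Set ℝ))).subset fun σ hσ w => ?_
  simpa using hσ w

lemma exists_isGroundState [Fintype E] [Finite V] (J : E → ℝ) : ∃ σ, IsGroundState ends J σ := by
  obtain ⟨σ, hσ, hmax⟩ :=
    Set.exists_max_image _ (eaH ends J) finite_spins ⟨1, fun _ => Or.inl rfl⟩
  exact ⟨σ, hσ, hmax⟩

def gaugeCouplings (τ : V → ℝ) (J : E → ℝ) : E → ℝ :=
  fun e => τ (ends e).1 * τ (ends e).2 * J e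

lemma eaH_gaugeCouplings [Fintype E] {τ : V → ℝ} (hτ : τ ∈ Spins V) (J : E → ℝ) (σ : V → ℝ) :
    eaH ends (gaugeCouplings ends τ J) (τ * σ) = eaH ends J σ := by
  refine Finset.sum_congr rfl fun e _ => ?_
  have h₁ := Spins.sq_apply hτ (ends e).1
  have h₂ := Spins.sq_apply hτ (ends e).2
  simp only [gaugeCouplings, Pi.mul_apply]
  linear_combination J e * σ (ends e).1 * σ (ends e).2 *
    (τ (ends e).2 ^ 2 * h₁ + h₂)

lemma IsGroundState.gauge [Fintype E] {τ : V → ℝ} (hτ : τ ∈ Spins V) {J : E → ℝ} {σ : V → ℝ}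
    (hσ : IsGroundState ends J σ) :
    IsGroundState ends (gaugeCouplings ends τ J) (τ * σ) := by
  refine ⟨Spins.mul_mem hτ hσ.1, fun σ' hσ' => ?_⟩
  rw [eaH_gaugeCouplings ends hτ, ← Spins.mul_mul_cancel_left hτ σ', eaH_gaugeCouplings ends hτ]
  exact hσ.2 _ (Spins.mul_mem hτ hσ')

end GroundStates

section Gaussian

lemma gaussianReal_map_const_mul_of_sq_eq_one {c : ℝ} (hc : c ^ 2 = 1) (v : NNReal) :
    (gaussianReal 0 v).map (c * ·) = gaussianReal 0 v := by
  rw [gaussianReal_map_const_mul, mul_zero]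
  congr
  ext
  simp [hc]

instance (E : Type) [Fintype E] : IsProbabilityMeasure (gaussPi E) := by
  unfold gaussPi
  infer_instance

lemma measurePreserving_gaussPi_mul {E : Type} [Fintype E] {ε : E → ℝ}
    (hε : ∀ e, ε e ^ 2 = 1) :
    MeasurePreserving (fun J e => ε e * J e) (gaussPi E) (gaussPi E) :=
  measurePreserving_pi _ _ fun e =>
    ⟨measurable_const_mul (ε e), gaussianReal_map_const_mul_of_sq_eq_one (hε e) 1⟩

lemma measurePreserving_gaugeCouplings {V E : Type} [Fintype E] (ends : E → V × V)
    {τ : V → ℝ} (hτ : τ ∈ Spins V) :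
    MeasurePreserving (gaugeCouplings ends τ) (gaussPi E) (gaussPi E) :=
  measurePreserving_gaussPi_mul fun e => by
    rw [mul_pow, Spins.sq_apply hτ, Spins.sq_apply hτ, one_mul]

end Gaussian

section CondExp

variable {Ω : Type*} {m m₀ : MeasurableSpace Ω} {μ : Measure Ω} {T : Ω → Ω}

lemma preimage_eq_of_measurableSet_comap {β : Type*} [MeasurableSpace β] {f : Ω → β}
    (hfT : f ∘ T = f) {A : Set Ω} (hA : MeasurableSet[MeasurableSpace.comap f ‹_›] A) :
    T ⁻¹' A = A := by
  obtain ⟨B, -, rfl⟩ := hA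
  rw [← Set.preimage_comp, hfT]

lemma setIntegral_comp_of_preimage_eq (hT : MeasurePreserving T μ μ) {A : Set Ω}
    (hA : MeasurableSet A) (hTA : T ⁻¹' A = A) {g : Ω → ℝ} (hg : AEStronglyMeasurable g μ) :
    ∫ x in A, g (T x) ∂μ = ∫ x in A, g x ∂μ := by
  have hTA' := hT.restrict_preimage hA
  rw [hTA] at hTA'
  have hgA : AEStronglyMeasurable g ((μ.restrict A).map T) := by
    rw [hTA'.map_eq]
    exact hg.restrict
  rw [← integral_map hT.measurable.aemeasurable hgA, hTA'.map_eq]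

theorem condExp_ae_eq_zero_of_comp_ae_eq_neg [IsFiniteMeasure μ] (hm : m ≤ m₀)
    (hT : MeasurePreserving T μ μ) (hTm : ∀ A, MeasurableSet[m] A → T ⁻¹' A = A)
    {g : Ω → ℝ} (hg : Integrable g μ) (hneg : g ∘ T =ᵐ[μ] -g) :
    μ[g | m] =ᵐ[μ] 0 := by
  refine (ae_eq_condExp_of_forall_setIntegral_eq hm hg (fun _ _ _ => integrableOn_zero)
    (fun A hA _ => ?_) aestronglyMeasurable_const).symm
  have hflip : ∫ x in A, g x ∂μ = -∫ x in A, g x ∂μ := by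
    calc ∫ x in A, g x ∂μ = ∫ x in A, g (T x) ∂μ :=
          (setIntegral_comp_of_preimage_eq hT (hm A hA) (hTm A hA) hg.1).symm
      _ = ∫ x in A, -g x ∂μ := integral_congr_ae (ae_restrict_of_ae hneg)
      _ = -∫ x in A, g x ∂μ := integral_neg _
  simp only [integral_zero]
  linarith

end CondExp

section RelativeSpin

variable {V E : Type} (ends : E → V × V)

lemma reach_fst_iff_snd {S : Set E} {e : E} (he : e ∈ S) (u : V) :
    reach ends S u (ends e).1 ↔ reach ends S u (ends e).2 :=
  ⟨fun h => h.tail ⟨e, he, Or.inl rfl⟩, fun h => h.tail ⟨e, he, Or.inr rfl⟩⟩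

noncomputable def componentSign (S : Set E) (u : V) : V → ℝ :=
  fun w => if reach ends S u w then -1 else 1

lemma componentSign_mem_spins (S : Set E) (u : V) : componentSign ends S u ∈ Spins V := by
  intro w
  unfold componentSign
  split_ifs <;> simp

lemma gaugeCouplings_componentSign_apply_of_mem {S : Set E} {e : E} (he : e ∈ S) (u : V)
    (J : E → ℝ) : gaugeCouplings ends (componentSign ends S u) J e = J e := by
  simp only [gaugeCouplings, componentSign, reach_fst_iff_snd ends he]
  split_ifs <;> ring

lemma coordSigma_le [Fintype E] (S : Set E) : coordSigma E S ≤ MeasurableSpace.pi :=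
  Measurable.comap_le (f := fun (J : E → ℝ) (e : S) => J e) (by fun_prop)

lemma preimage_gaugeCouplings_componentSign [Fintype E] {S : Set E} (u : V) {A : Set (E → ℝ)}
    (hA : MeasurableSet[coordSigma E S] A) :
    gaugeCouplings ends (componentSign ends S u) ⁻¹' A = A := by
  refine preimage_eq_of_measurableSet_comap (funext fun J => funext fun e => ?_) hA
  exact gaugeCouplings_componentSign_apply_of_mem ends e.2 u J

variable [Fintype E] {μ : Measure (E → ℝ)} {u v : V} {g : (E → ℝ) → ℝ}

lemma integrable_of_ae_eq_groundState_spin [Finite V] [IsFiniteMeasure μ] (hg : Measurable g)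
    (hgs : ∀ᵐ J ∂μ, ∀ σ : V → ℝ, IsGroundState ends J σ → g J = σ u * σ v) :
    Integrable g μ := by
  refine (integrable_const (1 : ℝ)).mono' hg.aestronglyMeasurable ?_
  filter_upwards [hgs] with J hJ
  obtain ⟨σ, hσ⟩ := exists_isGroundState ends J
  rw [hJ σ hσ, Real.norm_eq_abs, abs_mul, Spins.abs_apply hσ.1, Spins.abs_apply hσ.1, mul_one]

lemma comp_gaugeCouplings_ae_eq_neg [Finite V] {τ : V → ℝ} (hτ : τ ∈ Spins V)
    (hτuv : τ u * τ v = -1) (hμ : MeasurePreserving (gaugeCouplings ends τ) μ μ)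
    (hgs : ∀ᵐ J ∂μ, ∀ σ : V → ℝ, IsGroundState ends J σ → g J = σ u * σ v) :
    g ∘ gaugeCouplings ends τ =ᵐ[μ] -g := by
  have hgs' := hμ.quasiMeasurePreserving.tendsto_ae.eventually hgs
  filter_upwards [hgs, hgs'] with J hJ hJ'
  obtain ⟨σ, hσ⟩ := exists_isGroundState ends J
  rw [Function.comp_apply, hJ' _ (hσ.gauge ends hτ), Pi.neg_apply, hJ σ hσ, Pi.mul_apply,
    Pi.mul_apply]
  linear_combination σ u * σ v * hτuv

end RelativeSpin

theorem condexp_relative_spin_zero_general {V E : Type} [Fintype V] [Fintype E]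
    (ends : E → V × V) (u v : V)
    (S : Set E) (hS : ¬ reach ends S u v)
    (g : (E → ℝ) → ℝ) (hg : Measurable g)
    (hgs : ∀ᵐ J ∂(gaussPi E), ∀ σ : V → ℝ, IsGroundState ends J σ → g J = σ u * σ v) :
    (gaussPi E)[g | coordSigma E S] =ᵐ[gaussPi E] 0 := by
  have hτ := componentSign_mem_spins ends S u
  have hτuv : componentSign ends S u u * componentSign ends S u v = -1 := by
    have hu : reach ends S u u := Relation.ReflTransGen.refl
    simp [componentSign, hu, hS]
  have hT := measurePreserving_gaugeCouplings ends hτ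
  exact condExp_ae_eq_zero_of_comp_ae_eq_neg (coordSigma_le S) hT
    (fun _ => preimage_gaugeCouplings_componentSign ends u)
    (integrable_of_ae_eq_groundState_spin ends hg hgs)
    (comp_gaugeCouplings_ae_eq_neg ends hτ hτuv hT hgs)

/-- If `S ⊆ E` does not connect `u` and `v`, the conditional expectation of the relative
ground-state spin `σ_u σ_v` (represented by a measurable function `g` of the couplings
agreeing with `σ_u σ_v` for every ground state, a.s.) given the couplings on `S`
vanishes almost surely. -/
theorem condexp_relative_spin_zero {V E : Type} [Fintype V] [Fintype E]
    (ends : E → V × V) (u v : V)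
    (hconn : ∀ x y : V, reach ends Set.univ x y)
    (S : Set E) (hS : ¬ reach ends S u v)
    (g : (E → ℝ) → ℝ) (hg : Measurable g)
    (hgs : ∀ᵐ J ∂(gaussPi E), ∀ σ : V → ℝ, IsGroundState ends J σ → g J = σ u * σ v) :
    (gaussPi E)[g | coordSigma E S] =ᵐ[gaussPi E] 0 :=
  condexp_relative_spin_zero_general ends u v S hS g hg hgs
end

section
/- Let u, v be in a finite connected graph with i.i.d. Gaussian couplings. If a multi-index 𝐤 ∈ ℕ^E has support E_𝐤 = {e : k_e ≥ 1} that does not connect u and v, then the Hermite–Fourier coefficient α_𝐤 = E[σ_u σ_v · h_𝐤({J_e})] equals 0. -/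
open MeasureTheory ProbabilityTheory
open scoped Classical

/-- The `k`-th probabilists' Hermite polynomial, normalized to be orthonormal in
`L²` of the standard Gaussian measure. -/
noncomputable def hermiteFun (k : ℕ) (x : ℝ) : ℝ :=
  (Polynomial.aeval x (Polynomial.hermite k)) / Real.sqrt (Nat.factorial k)

/-- Tensorized Hermite polynomial `h_𝐤({J_e}) = ∏_e h_{k_e}(J_e)` for a multi-index `𝐤`. -/
noncomputable def hermiteTensor {E : Type} [Fintype E] (k : E → ℕ) (J : E → ℝ) : ℝ :=
  ∏ e, hermiteFun (k e) (J e)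

section Aux

variable {V E : Type} [Fintype V] [Fintype E]

/-- Flip the couplings on edges crossing the boundary of `S`. -/
noncomputable def flipJ (ends : E → V × V) (S : Set V) (J : E → ℝ) : E → ℝ :=
  fun e => if ((ends e).1 ∈ S ↔ (ends e).2 ∈ S) then J e else -(J e)

/-- Flip the spins on `S`. -/
noncomputable def flipS (S : Set V) (σ : V → ℝ) : V → ℝ :=
  fun x => if x ∈ S then -(σ x) else σ x

lemma flipJ_invol (ends : E → V × V) (S : Set V) (J : E → ℝ) :
    flipJ ends S (flipJ ends S J) = J := by
  funext e
  simp only [flipJ]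
  split <;> simp

lemma flipS_invol (S : Set V) (σ : V → ℝ) : flipS S (flipS S σ) = σ := by
  funext x
  simp only [flipS]
  split <;> simp

lemma flipS_mem_spins (S : Set V) {σ : V → ℝ} (hσ : σ ∈ Spins V) : flipS S σ ∈ Spins V := by
  intro x
  simp only [flipS]
  rcases hσ x with h | h <;> split <;> simp [h]

lemma eaH_flip (ends : E → V × V) (S : Set V) (J : E → ℝ) (σ : V → ℝ) :
    eaH ends (flipJ ends S J) (flipS S σ) = eaH ends J σ := by
  unfold eaH
  refine Finset.sum_congr rfl fun e _ => ?_
  simp only [flipJ, flipS]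
  by_cases h1 : (ends e).1 ∈ S <;> by_cases h2 : (ends e).2 ∈ S <;>
    simp [h1, h2] <;> ring

lemma isGroundState_flip (ends : E → V × V) (S : Set V) {J : E → ℝ} {σ : V → ℝ}
    (h : IsGroundState ends J σ) : IsGroundState ends (flipJ ends S J) (flipS S σ) := by
  obtain ⟨hs, hmax⟩ := h
  refine ⟨flipS_mem_spins S hs, fun σ' hσ' => ?_⟩
  have h1 : eaH ends (flipJ ends S J) σ' = eaH ends J (flipS S σ') := by
    conv_lhs => rw [← flipS_invol S σ']
    exact eaH_flip ends S J (flipS S σ')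
  rw [h1, eaH_flip]
  exact hmax _ (flipS_mem_spins S hσ')

lemma exists_groundState (ends : E → V × V) (J : E → ℝ) :
    ∃ σ, IsGroundState ends J σ := by
  have hfin : (Spins V).Finite := by
    have : Spins V ⊆ Set.pi Set.univ (fun _ : V => ({1, -1} : Set ℝ)) := by
      intro σ hσ x _
      rcases hσ x with h | h <;> simp [h]
    exact Set.Finite.subset (Set.Finite.pi fun _ => Set.toFinite _) this
  have hne : (Spins V).Nonempty := ⟨fun _ => 1, fun _ => Or.inl rfl⟩
  obtain ⟨σ, hσ, hmax⟩ := Set.exists_max_image (Spins V) (eaH ends J) hfin hne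
  exact ⟨σ, hσ, fun σ' hσ' => hmax σ' hσ'⟩

lemma flipJ_measurable (ends : E → V × V) (S : Set V) :
    Measurable (flipJ ends S) := by
  apply measurable_pi_lambda
  intro e
  unfold flipJ
  split
  · exact measurable_pi_apply e
  · exact (measurable_pi_apply e).neg

lemma flipJ_measurePreserving (ends : E → V × V) (S : Set V) :
    MeasurePreserving (flipJ ends S) (gaussPi E) (gaussPi E) := by
  have hneg : MeasurePreserving (fun x : ℝ => -x) (gaussianReal 0 1) (gaussianReal 0 1) := by
    refine ⟨measurable_neg, ?_⟩
    have := gaussianReal_map_const_mul (μ := 0) (v := 1) (-1)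
    simpa [neg_one_mul] using this
  have hid : MeasurePreserving (fun x : ℝ => x) (gaussianReal 0 1) (gaussianReal 0 1) :=
    MeasurePreserving.id _
  exact measurePreserving_pi _ _ (f := fun e x =>
    if ((ends e).1 ∈ S ↔ (ends e).2 ∈ S) then x else -x)
    (fun e => by by_cases h : ((ends e).1 ∈ S ↔ (ends e).2 ∈ S) <;> simp [h] <;> assumption)

/-- `flipJ` as a measurable equivalence. -/
noncomputable def flipJEquiv (ends : E → V × V) (S : Set V) : (E → ℝ) ≃ᵐ (E → ℝ) where
  toFun := flipJ ends S
  invFun := flipJ ends S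
  left_inv := flipJ_invol ends S
  right_inv := flipJ_invol ends S
  measurable_toFun := flipJ_measurable ends S
  measurable_invFun := flipJ_measurable ends S

end Aux

/-- If the support `E_𝐤 = {e : k_e ≥ 1}` of a multi-index `𝐤` does not connect `u` and
`v`, then the Hermite–Fourier coefficient `α_𝐤 = E[σ_u σ_v · h_𝐤({J_e})]` of the relative
ground-state spin (represented by a measurable function `g`) vanishes. -/
theorem hermite_coefficient_zero_of_disconnected {V E : Type} [Fintype V] [Fintype E]
    (ends : E → V × V) (u v : V)
    (hconn : ∀ x y : V, reach ends Set.univ x y)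
    (g : (E → ℝ) → ℝ) (hg : Measurable g)
    (hgs : ∀ᵐ J ∂(gaussPi E), ∀ σ : V → ℝ, IsGroundState ends J σ → g J = σ u * σ v)
    (k : E → ℕ) (hk : ¬ reach ends {e : E | k e ≠ 0} u v) :
    ∫ J, g J * hermiteTensor k J ∂(gaussPi E) = 0 := by
  set S : Set V := {x | reach ends {e : E | k e ≠ 0} u x} with hS
  have huS : u ∈ S := Relation.ReflTransGen.refl
  have hvS : v ∉ S := hk
  -- edges in the support of k do not cross the boundary of S
  have hcross : ∀ e : E, k e ≠ 0 → ((ends e).1 ∈ S ↔ (ends e).2 ∈ S) := by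
    intro e hke
    constructor
    · intro h1
      exact Relation.ReflTransGen.tail h1 ⟨e, hke, Or.inl (by simp)⟩
    · intro h2
      exact Relation.ReflTransGen.tail h2 ⟨e, hke, Or.inr (by simp)⟩
  -- the Hermite tensor is invariant under flipJ
  have hherm : ∀ J, hermiteTensor k (flipJ ends S J) = hermiteTensor k J := by
    intro J
    unfold hermiteTensor
    refine Finset.prod_congr rfl fun e _ => ?_
    by_cases hke : k e = 0
    · simp [hermiteFun, hke, Polynomial.hermite_zero]
    · simp [flipJ, hcross e hke]
  -- g is anti-invariant a.e.
  have hmp := flipJ_measurePreserving ends S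
  have hgs' : ∀ᵐ J ∂(gaussPi E),
      ∀ σ : V → ℝ, IsGroundState ends (flipJ ends S J) σ → g (flipJ ends S J) = σ u * σ v :=
    hmp.quasiMeasurePreserving.ae hgs
  have hanti : ∀ᵐ J ∂(gaussPi E), g (flipJ ends S J) = - g J := by
    filter_upwards [hgs, hgs'] with J hJ hJ'
    obtain ⟨σ, hσ⟩ := exists_groundState ends J
    have hσ' : IsGroundState ends (flipJ ends S J) (flipS S σ) :=
      isGroundState_flip ends S hσ
    rw [hJ' (flipS S σ) hσ', hJ σ hσ]
    simp only [flipS, if_pos huS, if_neg hvS]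
    ring
  -- measurability of the integrand
  have hht : Measurable (hermiteTensor k) := by
    apply Finset.measurable_prod
    intro e _
    have hc : Continuous (hermiteFun (k e)) := by
      unfold hermiteFun
      exact (Polynomial.hermite (k e)).continuous_aeval.div_const _
    exact hc.measurable.comp (measurable_pi_apply e)
  have hf : Measurable fun J => g J * hermiteTensor k J := hg.mul hht
  -- conclude by the change of variables
  have hint : ∫ J, g J * hermiteTensor k J ∂(gaussPi E)
      = ∫ J, g (flipJ ends S J) * hermiteTensor k (flipJ ends S J) ∂(gaussPi E) := by
    exact (hmp.integral_comp (flipJEquiv ends S).measurableEmbedding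
      (fun J => g J * hermiteTensor k J)).symm
  have hneg : ∫ J, g (flipJ ends S J) * hermiteTensor k (flipJ ends S J) ∂(gaussPi E)
      = - ∫ J, g J * hermiteTensor k J ∂(gaussPi E) := by
    rw [← integral_neg]
    refine integral_congr_ae ?_
    filter_upwards [hanti] with J hJ
    rw [hherm J, hJ]
    ring
  have := hint.trans hneg
  linarith
end

section
/- (Barrier lemma) Consider the barrier configuration around an edge e in ℤ²: a 5×3 box of edges around e where every boundary edge in a designated spanning path ('blue' edges) has |J_f| ≥ 100 and every other edge incident to the box ('red' edges, at most 20 of them) has |J_f| ≤ 1. Then for any ground state σ, traversing the boundary vertices w_1,…,w_10 of the box, one has σ_{w_i}σ_{w_{i+1}}J_{(w_i,w_{i+1})} > 0 for every consecutive pair along the blue path; in particular all boundary spins are determined (up to global sign) independently of the value of J_e. -/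
open MeasureTheory ProbabilityTheory
open scoped Classical

lemma barrier_key {V E : Type} [Fintype V] [Fintype E] (ends : E → V × V)
    (J : E → ℝ) (w : Fin 10 → V) (hw : Function.Injective w)
    (blue : Fin 9 → E) (Red : Finset E)
    (hblue_ends : ∀ i : Fin 9, ends (blue i) = (w i.castSucc, w i.succ) ∨
      ends (blue i) = (w i.succ, w i.castSucc))
    (hblue_high : ∀ i : Fin 9, 100 ≤ |J (blue i)|)
    (hred_card : Red.card ≤ 20)
    (hred_low : ∀ f ∈ Red, |J f| ≤ 1)
    (hincident : ∀ f : E, ((ends f).1 ∈ Set.range w ∨ (ends f).2 ∈ Set.range w) →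
      (∃ i : Fin 9, f = blue i) ∨ f ∈ Red)
    (σ : V → ℝ) (hσ : IsGroundState ends J σ) :
    ∀ i : Fin 9, 0 < σ (w i.castSucc) * σ (w i.succ) * J (blue i) := by
  intro i
  by_contra hcon
  push_neg at hcon
  have hspin : ∀ v, σ v = 1 ∨ σ v = -1 := hσ.1
  -- set of flipped vertices
  set S : Set V := {v | ∃ j : Fin 10, i.castSucc < j ∧ v = w j} with hSdef
  have hwS : ∀ j : Fin 10, w j ∈ S ↔ i.castSucc < j := by
    intro j
    constructor
    · rintro ⟨k, hk, hek⟩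
      rwa [hw hek]
    · intro h; exact ⟨j, h, rfl⟩
  set ε : V → ℝ := fun v => if v ∈ S then -1 else 1 with hεdef
  set σ2 : V → ℝ := fun v => ε v * σ v with hσ2def
  have hσ2spin : σ2 ∈ Spins V := by
    intro v
    by_cases hv : v ∈ S <;> rcases hspin v with h | h <;> simp [hσ2def, hεdef, hv, h]
  -- cut edges
  set C : Finset E := Finset.univ.filter
    (fun f => ¬ (((ends f).1 ∈ S) ↔ ((ends f).2 ∈ S))) with hCdef
  have hterm : ∀ f : E,
      J f * σ2 (ends f).1 * σ2 (ends f).2 - J f * σ (ends f).1 * σ (ends f).2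
        = (ε (ends f).1 * ε (ends f).2 - 1) * (J f * σ (ends f).1 * σ (ends f).2) := by
    intro f; simp only [hσ2def]; ring
  have hdiff : eaH ends J σ2 - eaH ends J σ
      = ∑ f ∈ C, (-2) * (J f * σ (ends f).1 * σ (ends f).2) := by
    rw [eaH, eaH, ← Finset.sum_sub_distrib]
    rw [← Finset.sum_subset (Finset.subset_univ C)]
    · apply Finset.sum_congr rfl
      intro f hf
      rw [hterm f]
      have hne : ¬ (((ends f).1 ∈ S) ↔ ((ends f).2 ∈ S)) := by
        simpa [hCdef] using hf
      have : ε (ends f).1 * ε (ends f).2 = -1 := by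
        by_cases h1 : (ends f).1 ∈ S <;> by_cases h2 : (ends f).2 ∈ S <;>
          simp [hεdef, h1, h2] at hne ⊢ <;> tauto
      rw [this]; ring
    · intro f _ hf
      rw [hterm f]
      have heq : (((ends f).1 ∈ S) ↔ ((ends f).2 ∈ S)) := by
        by_contra h
        exact hf (by simp [hCdef, h])
      have : ε (ends f).1 * ε (ends f).2 = 1 := by
        by_cases h1 : (ends f).1 ∈ S <;> by_cases h2 : (ends f).2 ∈ S <;>
          simp [hεdef, h1, h2] <;> tauto
      rw [this]; ring
  -- blue i is a cut edge
  have hblueC : blue i ∈ C := by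
    have h1 : w i.castSucc ∉ S := by rw [hwS]; simp
    have h2 : w i.succ ∈ S := by rw [hwS]; simp [Fin.lt_def]
    rcases hblue_ends i with h | h <;> simp [hCdef, h, h1, h2]
  -- every other cut edge is red
  have hCred : C.erase (blue i) ⊆ Red := by
    intro f hf
    have hfC : f ∈ C := Finset.mem_of_mem_erase hf
    have hfne : f ≠ blue i := Finset.ne_of_mem_erase hf
    have hne : ¬ (((ends f).1 ∈ S) ↔ ((ends f).2 ∈ S)) := by simpa [hCdef] using hfC
    have hinc : (ends f).1 ∈ Set.range w ∨ (ends f).2 ∈ Set.range w := by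
      by_contra h
      push_neg at h
      have h1 : (ends f).1 ∉ S := fun ⟨j, _, hj⟩ => h.1 ⟨j, hj.symm⟩
      have h2 : (ends f).2 ∉ S := fun ⟨j, _, hj⟩ => h.2 ⟨j, hj.symm⟩
      exact hne (by tauto)
    rcases hincident f hinc with ⟨j, hj⟩ | hred
    · exfalso
      subst hj
      have hji : (j : ℕ) ≠ (i : ℕ) := fun hh => hfne (by rw [Fin.ext hh])
      rcases hblue_ends j with h | h <;>
      · rw [h] at hne
        simp only [hwS, Fin.lt_def, Fin.coe_castSucc, Fin.val_succ] at hne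
        omega
    · exact hred
  -- bound the red contribution
  have hcard : (C.erase (blue i)).card ≤ 20 :=
    le_trans (Finset.card_le_card hCred) hred_card
  have hsum2 : (-40 : ℝ)
      ≤ ∑ f ∈ C.erase (blue i), (-2) * (J f * σ (ends f).1 * σ (ends f).2) := by
    have hterm2 : ∀ f ∈ C.erase (blue i),
        (-2 : ℝ) ≤ (-2) * (J f * σ (ends f).1 * σ (ends f).2) := by
      intro f hf
      have h1 := abs_le.mp (hred_low f (hCred hf))
      rcases hspin (ends f).1 with ha | ha <;> rcases hspin (ends f).2 with hb | hb <;>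
        rw [ha, hb] <;> nlinarith [h1.1, h1.2]
    have := Finset.card_nsmul_le_sum (C.erase (blue i))
      (fun f => (-2) * (J f * σ (ends f).1 * σ (ends f).2)) (-2 : ℝ) hterm2
    rw [nsmul_eq_mul] at this
    have h20 : ((C.erase (blue i)).card : ℝ) ≤ 20 := by exact_mod_cast hcard
    nlinarith
  -- bound the blue contribution
  have hpair : J (blue i) * σ (ends (blue i)).1 * σ (ends (blue i)).2
      = σ (w i.castSucc) * σ (w i.succ) * J (blue i) := by
    rcases hblue_ends i with h | h <;> rw [h] <;> ring
  have hblue_term : (200 : ℝ)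
      ≤ (-2) * (J (blue i) * σ (ends (blue i)).1 * σ (ends (blue i)).2) := by
    rw [hpair]
    rcases le_abs.mp (hblue_high i) with hc | hc <;>
      rcases hspin (w i.castSucc) with ha | ha <;>
      rcases hspin (w i.succ) with hb | hb <;>
      rw [ha, hb] at hcon ⊢ <;> linarith
  have hfinal : 160 ≤ eaH ends J σ2 - eaH ends J σ := by
    rw [hdiff, ← Finset.add_sum_erase _ _ hblueC]
    linarith
  have := hσ.2 σ2 hσ2spin
  linarith

/-- (Barrier lemma) Suppose a barrier configuration occurs around an edge `e₀`: the
boundary vertices `w_1, …, w_10` of a box around `e₀` carry a spanning path of "blue"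
edges `blue i` joining `w i` and `w (i+1)` with `|J| ≥ 100`, while every other edge
incident to the box boundary belongs to a set `Red` of at most `20` "red" edges with
`|J| ≤ 1`, and `e₀` itself is neither blue nor red. Then for any ground state `σ`,
`σ_{w_i} σ_{w_{i+1}} J_{(w_i, w_{i+1})} > 0` along the blue path; in particular all
boundary spins are determined (up to global sign) independently of the value of
`J_{e₀}`. -/
theorem barrier_lemma {V E : Type} [Fintype V] [Fintype E] (ends : E → V × V)
    (J : E → ℝ) (w : Fin 10 → V) (hw : Function.Injective w)
    (blue : Fin 9 → E) (Red : Finset E) (e₀ : E)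
    (hblue_ends : ∀ i : Fin 9, ends (blue i) = (w i.castSucc, w i.succ) ∨
      ends (blue i) = (w i.succ, w i.castSucc))
    (hblue_high : ∀ i : Fin 9, 100 ≤ |J (blue i)|)
    (hred_card : Red.card ≤ 20)
    (hred_low : ∀ f ∈ Red, |J f| ≤ 1)
    (hincident : ∀ f : E, ((ends f).1 ∈ Set.range w ∨ (ends f).2 ∈ Set.range w) →
      (∃ i : Fin 9, f = blue i) ∨ f ∈ Red)
    (he₀ : (∀ i : Fin 9, e₀ ≠ blue i) ∧ e₀ ∉ Red)
    (σ : V → ℝ) (hσ : IsGroundState ends J σ) :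
    (∀ i : Fin 9, 0 < σ (w i.castSucc) * σ (w i.succ) * J (blue i)) ∧
    (∀ (J' : E → ℝ) (σ' : V → ℝ), (∀ f : E, f ≠ e₀ → J' f = J f) →
      IsGroundState ends J' σ' →
      ∀ i j : Fin 10, σ' (w i) * σ' (w j) = σ (w i) * σ (w j)) := by
  have part1 := barrier_key ends J w hw blue Red hblue_ends hblue_high hred_card
    hred_low hincident σ hσ
  refine ⟨part1, ?_⟩
  intro J' σ' hJ' hσ' i j
  have hJblue : ∀ k : Fin 9, J' (blue k) = J (blue k) :=
    fun k => hJ' (blue k) (Ne.symm (he₀.1 k))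
  have hred' : ∀ f ∈ Red, |J' f| ≤ 1 := by
    intro f hf
    rw [hJ' f (fun h => he₀.2 (h ▸ hf))]
    exact hred_low f hf
  have hblue_high' : ∀ k : Fin 9, 100 ≤ |J' (blue k)| := by
    intro k; rw [hJblue k]; exact hblue_high k
  have part1' := barrier_key ends J' w hw blue Red hblue_ends hblue_high' hred_card
    hred' hincident σ' hσ'
  have hcons : ∀ k : Fin 9,
      σ' (w k.castSucc) * σ' (w k.succ) = σ (w k.castSucc) * σ (w k.succ) := by
    intro k
    have h1 := part1 k
    have h2 := part1' k
    rw [hJblue k] at h2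
    rcases hσ.1 (w k.castSucc) with ha | ha <;> rcases hσ.1 (w k.succ) with hb | hb <;>
      rcases hσ'.1 (w k.castSucc) with ha' | ha' <;>
      rcases hσ'.1 (w k.succ) with hb' | hb' <;>
      rw [ha, hb] at h1 <;> rw [ha', hb'] at h2 <;> rw [ha, hb, ha', hb'] <;> linarith
  have hsq : ∀ v, σ v * σ v = 1 := by
    intro v; rcases hσ.1 v with h | h <;> rw [h] <;> norm_num
  have hsq' : ∀ v, σ' v * σ' v = 1 := by
    intro v; rcases hσ'.1 v with h | h <;> rw [h] <;> norm_num
  have hk : ∀ k : Fin 10, σ' (w k) * σ' (w 0) = σ (w k) * σ (w 0) := by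
    intro k
    induction k using Fin.induction with
    | zero => rw [hsq' (w 0), hsq (w 0)]
    | succ m ih =>
        have h := hcons m
        have e1 := hsq' (w m.castSucc)
        have e2 := hsq (w m.castSucc)
        calc σ' (w m.succ) * σ' (w 0)
            = (σ' (w m.castSucc) * σ' (w m.castSucc)) * (σ' (w m.succ) * σ' (w 0)) := by
              rw [e1]; ring
          _ = (σ' (w m.castSucc) * σ' (w m.succ)) * (σ' (w m.castSucc) * σ' (w 0)) := by
              ring
          _ = (σ (w m.castSucc) * σ (w m.succ)) * (σ (w m.castSucc) * σ (w 0)) := by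
              rw [h, ih]
          _ = (σ (w m.castSucc) * σ (w m.castSucc)) * (σ (w m.succ) * σ (w 0)) := by ring
          _ = σ (w m.succ) * σ (w 0) := by rw [e2]; ring
  have e := hsq' (w 0)
  have e2 := hsq (w 0)
  calc σ' (w i) * σ' (w j)
      = (σ' (w i) * σ' (w 0)) * (σ' (w j) * σ' (w 0)) := by
        rw [show (σ' (w i) * σ' (w 0)) * (σ' (w j) * σ' (w 0))
            = (σ' (w i) * σ' (w j)) * (σ' (w 0) * σ' (w 0)) from by ring, e, mul_one]
    _ = (σ (w i) * σ (w 0)) * (σ (w j) * σ (w 0)) := by rw [hk i, hk j]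
    _ = σ (w i) * σ (w j) := by
        rw [show (σ (w i) * σ (w 0)) * (σ (w j) * σ (w 0))
            = (σ (w i) * σ (w j)) * (σ (w 0) * σ (w 0)) from by ring, e2, mul_one]
end

section
/- If spin values in a configuration σ violate the blue-edge sign conditions of the barrier, then modifying σ on the 10 boundary vertices of the barrier box to satisfy σ_{w_{i-1}}σ_{w_i} = sign(J_{(w_{i-1},w_i)}) along the blue path strictly increases the energy: H(σ̂) − H(σ) ≥ 2·min_blue |J_f| − 2·Σ_{f red} |J_f| ≥ 160 > 0, contradicting optimality of σ. -/
open MeasureTheory ProbabilityTheory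
open scoped Classical

/-- If a spin configuration `σ` violates the blue-edge sign conditions of the barrier,
then the configuration `σ̂`, modified only on the barrier's boundary vertices so as to
satisfy the sign condition `σ̂_x σ̂_y J_f = |J_f|` on every blue edge, strictly increases
the energy:
`H(σ̂) − H(σ) ≥ 2 min_{blue} |J_f| − 2 Σ_{f red} |J_f| ≥ 160 > 0`,
contradicting optimality of `σ`. (Here blue edges have `|J| ≥ 100`, there are at most
`20` red edges, each with `|J| ≤ 1`, and all edges on which the spin product changes are
blue or red.) -/
theorem barrier_energy_gain {V E : Type} [Fintype E] (ends : E → V × V) (J : E → ℝ)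
    (Blue Red : Finset E) (hdisj : Disjoint Blue Red) (hBlue : Blue.Nonempty)
    (σ σhat : V → ℝ) (hσ : σ ∈ Spins V) (hσhat : σhat ∈ Spins V)
    (hoff : ∀ f : E, f ∉ Blue → f ∉ Red →
      σhat (ends f).1 * σhat (ends f).2 = σ (ends f).1 * σ (ends f).2)
    (hblue_high : ∀ f ∈ Blue, 100 ≤ |J f|)
    (hblue_sign : ∀ f ∈ Blue, σhat (ends f).1 * σhat (ends f).2 * J f = |J f|)
    (hviol : ∃ f ∈ Blue, σ (ends f).1 * σ (ends f).2 * J f < 0)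
    (hred_card : Red.card ≤ 20)
    (hred_low : ∀ f ∈ Red, |J f| ≤ 1) :
    2 * Blue.inf' hBlue (fun f => |J f|) - 2 * ∑ f ∈ Red, |J f| ≤
      eaH ends J σhat - eaH ends J σ ∧
    (160 : ℝ) ≤ 2 * Blue.inf' hBlue (fun f => |J f|) - 2 * ∑ f ∈ Red, |J f| := by
  have habsp : ∀ (τ : V → ℝ), τ ∈ Spins V → ∀ e : E, |τ (ends e).1 * τ (ends e).2| = 1 := by
    intro τ hτ e
    rcases hτ (ends e).1 with h1 | h1 <;> rcases hτ (ends e).2 with h2 | h2 <;>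
      simp [h1, h2]
  have key : 2 * Blue.inf' hBlue (fun f => |J f|) - 2 * ∑ f ∈ Red, |J f| ≤
      eaH ends J σhat - eaH ends J σ := by
    set p : E → ℝ := fun e => σ (ends e).1 * σ (ends e).2 with hp
    set q : E → ℝ := fun e => σhat (ends e).1 * σhat (ends e).2 with hq
    have hdiff : eaH ends J σhat - eaH ends J σ = ∑ e, (J e * q e - J e * p e) := by
      simp only [eaH, hp, hq, ← Finset.sum_sub_distrib]
      exact Finset.sum_congr rfl fun e _ => by ring
    have hsumBR : ∑ e, (J e * q e - J e * p e)
        = ∑ e ∈ Blue ∪ Red, (J e * q e - J e * p e) := by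
      symm; apply Finset.sum_subset (Finset.subset_univ _)
      intro e _ he
      have h1 : e ∉ Blue := fun h => he (Finset.mem_union_left _ h)
      have h2 : e ∉ Red := fun h => he (Finset.mem_union_right _ h)
      have := hoff e h1 h2
      simp only [hp, hq, this]; ring
    have hsplit := Finset.sum_union (f := fun e => J e * q e - J e * p e) hdisj
    obtain ⟨f0, hf0B, hf0⟩ := hviol
    have hblue_bound : 2 * Blue.inf' hBlue (fun f => |J f|)
        ≤ ∑ e ∈ Blue, (J e * q e - J e * p e) := by
      have hnn : ∀ e ∈ Blue, 0 ≤ J e * q e - J e * p e := by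
        intro e he
        have h1 : J e * q e = |J e| := by
          have := hblue_sign e he; simpa [hq, mul_comm] using this
        have h2 : J e * p e ≤ |J e| := by
          calc J e * p e ≤ |J e * p e| := le_abs_self _
            _ = |J e| * |p e| := abs_mul _ _
            _ = |J e| := by rw [habsp σ hσ e]; ring
        linarith
      have h1 : J f0 * q f0 = |J f0| := by
        have := hblue_sign f0 hf0B; simpa [hq, mul_comm] using this
      have h2 : J f0 * p f0 = -|J f0| := by
        have habs : |J f0 * p f0| = |J f0| := by
          rw [abs_mul, habsp σ hσ f0, mul_one]
        have hneg : J f0 * p f0 < 0 := by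
          have := hf0; simpa [hp, mul_comm] using this
        rw [abs_of_neg hneg] at habs; linarith
      have hle : 2 * Blue.inf' hBlue (fun f => |J f|) ≤ J f0 * q f0 - J f0 * p f0 := by
        have := Finset.inf'_le (fun f => |J f|) hf0B
        rw [h1, h2]; linarith
      calc 2 * Blue.inf' hBlue (fun f => |J f|) ≤ J f0 * q f0 - J f0 * p f0 := hle
        _ ≤ ∑ e ∈ Blue, (J e * q e - J e * p e) := Finset.single_le_sum hnn hf0B
    have hred_bound : -(2 * ∑ f ∈ Red, |J f|)
        ≤ ∑ e ∈ Red, (J e * q e - J e * p e) := by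
      rw [Finset.mul_sum, ← Finset.sum_neg_distrib]
      apply Finset.sum_le_sum
      intro e _
      have hq1 : J e * q e ≥ -|J e| := by
        have : |J e * q e| = |J e| := by rw [abs_mul, habsp σhat hσhat e, mul_one]
        have := neg_abs_le (J e * q e); linarith [this, (abs_mul (J e) (q e)).symm ▸ this]
      have hqa : |J e * q e| = |J e| := by rw [abs_mul, habsp σhat hσhat e, mul_one]
      have hpa : |J e * p e| = |J e| := by rw [abs_mul, habsp σ hσ e, mul_one]
      have := neg_abs_le (J e * q e)
      have := le_abs_self (J e * p e)
      nlinarith [neg_abs_le (J e * q e), le_abs_self (J e * p e)]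
    rw [hdiff, hsumBR, hsplit]
    linarith
  refine ⟨key, ?_⟩
  have h100 : (100 : ℝ) ≤ Blue.inf' hBlue (fun f => |J f|) :=
    Finset.le_inf' hBlue _ hblue_high
  have h20 : ∑ f ∈ Red, |J f| ≤ 20 := by
    calc ∑ f ∈ Red, |J f| ≤ ∑ _f ∈ Red, (1 : ℝ) := Finset.sum_le_sum hred_low
      _ = Red.card := by simp
      _ ≤ 20 := by exact_mod_cast hred_card
  linarith
end
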